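/- Weakening substitutions are pattern substitutions with increasing indices, and weaken(Γ; i) is a weakening substitution typed Γ ⊢ weaken(Γ; i) : Γ ÷ i whenever the i-th assumption of Γ is not linear. -/

import Mathlib

namespace LinUnif

/-- Linearity flags on variables/terms. -/
inductive Flag | I | A | L
deriving DecidableEq

/-- Context linearity flags: intuitionistic, affine, used affine, linear, used linear. -/
inductive CFlag | i | a | ua | l | ul
deriving DecidableEq

/-- Types of the linear/affine λ-calculus. -/
inductive Ty
  | base (n : ℕ)
  | withT (A B : Ty)
  | lolli (A B : Ty)
  | affarr (A B : Ty)
  | arr (A B : Ty)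
deriving DecidableEq

/-- Contexts: lists of types tagged with context linearity flags (head = de Bruijn index 1). -/
abbrev Ctx := List (Ty × CFlag)

def flagC : Flag → CFlag | .I => .i | .A => .a | .L => .l
def cToF : CFlag → Flag | .i => .I | .a => .A | .ua => .A | .l => .L | .ul => .L

/-- No linear (L) assumptions occur. -/
def NoLin (Γ : Ctx) : Prop := ∀ e ∈ Γ, e.2 ≠ CFlag.l

/-- The intuitionistic part of a context: L ↦ UL, A ↦ UA. -/
def bar (Γ : Ctx) : Ctx :=
  Γ.map fun e => (e.1, match e.2 with | .l => CFlag.ul | .a => CFlag.ua | c => c)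

/-- Context splitting Γ = Γ₁ ⋈ Γ₂. -/
inductive Split : Ctx → Ctx → Ctx → Prop
  | nil : Split [] [] []
  | int {Γ Γ₁ Γ₂ A} : Split Γ Γ₁ Γ₂ → Split ((A,.i)::Γ) ((A,.i)::Γ₁) ((A,.i)::Γ₂)
  | ulin {Γ Γ₁ Γ₂ A} : Split Γ Γ₁ Γ₂ → Split ((A,.ul)::Γ) ((A,.ul)::Γ₁) ((A,.ul)::Γ₂)
  | uaff {Γ Γ₁ Γ₂ A} : Split Γ Γ₁ Γ₂ → Split ((A,.ua)::Γ) ((A,.ua)::Γ₁) ((A,.ua)::Γ₂)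
  | linl {Γ Γ₁ Γ₂ A} : Split Γ Γ₁ Γ₂ → Split ((A,.l)::Γ) ((A,.l)::Γ₁) ((A,.ul)::Γ₂)
  | linr {Γ Γ₁ Γ₂ A} : Split Γ Γ₁ Γ₂ → Split ((A,.l)::Γ) ((A,.ul)::Γ₁) ((A,.l)::Γ₂)
  | affl {Γ Γ₁ Γ₂ A} : Split Γ Γ₁ Γ₂ → Split ((A,.a)::Γ) ((A,.a)::Γ₁) ((A,.ua)::Γ₂)
  | affr {Γ Γ₁ Γ₂ A} : Split Γ Γ₁ Γ₂ → Split ((A,.a)::Γ) ((A,.ua)::Γ₁) ((A,.a)::Γ₂)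

/-- Affine weakening Γ ≻_aff Γ'. -/
def AffWeak (Γ Γ' : Ctx) : Prop := ∃ Γ'', Split Γ Γ'' Γ' ∧ NoLin Γ''

/-- Typing of variables (1-based de Bruijn indices): Γ ⊢ n^f ⇒ A. -/
inductive VarTy : Ctx → ℕ → Flag → Ty → Prop
  | here {Γ A f} : NoLin Γ → VarTy ((A, flagC f)::Γ) 1 f A
  | there {Γ B l n f A} : VarTy Γ n f A → l ≠ CFlag.l → VarTy ((B,l)::Γ) (n+1) f A

/-- Relaxed typing of variables Γ ⊢ᵢ n^f ⇒ A : all variables available,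
    disregarding linearity/affineness (usedness). -/
inductive VarTyR : Ctx → ℕ → Flag → Ty → Prop
  | here {Γ A l f} : cToF l = f → VarTyR ((A,l)::Γ) 1 f A
  | there {Γ B l n f A} : VarTyR Γ n f A → VarTyR ((B,l)::Γ) (n+1) f A

/-- Substitution entries: a de Bruijn index together with its variable flag f'
    and the extension flag f (the entry `n^{f'f}`). A full substitution is a
    list of entries followed by a shift `↑ⁿ`. -/
abbrev SubE := List (ℕ × Flag × Flag)

def shiftE (es : SubE) : SubE := es.map fun e => (e.1+1, e.2)

/-- Typing of substitutions (whose entries are variables): Γ ⊢ es.↑ⁿ : Γ'. -/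
inductive SubTy : Ctx → SubE → ℕ → Ctx → Prop
  | nil : SubTy [] [] 0 []
  | shift {Γ B l n Γ'} : SubTy Γ [] n Γ' → l ≠ CFlag.l → SubTy ((B,l)::Γ) [] (n+1) Γ'
  | consI {Γ m f' A es n Γ'} : VarTy (bar Γ) m f' A → SubTy Γ es n Γ' →
      SubTy Γ ((m,f',Flag.I)::es) n ((A,CFlag.i)::Γ')
  | consL {Γ Γ₁ Γ₂ m f' A es n Γ'} : Split Γ Γ₁ Γ₂ → VarTy Γ₁ m f' A → SubTy Γ₂ es n Γ' →
      SubTy Γ ((m,f',Flag.L)::es) n ((A,CFlag.l)::Γ')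
  | consA {Γ Γ₁ Γ₂ m f' A es n Γ'} : Split Γ Γ₁ Γ₂ → NoLin Γ₁ → VarTy Γ₁ m f' A →
      SubTy Γ₂ es n Γ' → SubTy Γ ((m,f',Flag.A)::es) n ((A,CFlag.a)::Γ')
  | consUL {Γ m f' A es n Γ'} : VarTyR Γ m f' A → SubTy Γ es n Γ' →
      SubTy Γ ((m,f',Flag.L)::es) n ((A,CFlag.ul)::Γ')
  | consUA {Γ m f' A es n Γ'} : VarTyR Γ m f' A → f' ≠ Flag.L → SubTy Γ es n Γ' →
      SubTy Γ ((m,f',Flag.A)::es) n ((A,CFlag.ua)::Γ')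

/-- Pattern substitution: distinct de Bruijn indices, no linear-changing extension. -/
def PatternSub (es : SubE) : Prop :=
  es.Pairwise (fun a b => a.1 ≠ b.1) ∧ ∀ e ∈ es, e.2.1 = e.2.2 ∧ 1 ≤ e.1

/-- Terms (canonical forms), with logic variables `lvar X es sh` under a
    substitution consisting of variable entries `es` and a trailing shift `sh`. -/
inductive Tm
  | var (n : ℕ) (f : Flag)
  | lvar (X : ℕ) (es : SubE) (sh : ℕ)
  | pair (M N : Tm)
  | fst (M : Tm)
  | snd (M : Tm)
  | lamL (M : Tm)
  | lamA (M : Tm)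
  | lamI (M : Tm)
  | appL (M N : Tm)
  | appA (M N : Tm)
  | appI (M N : Tm)
deriving DecidableEq

/-- Bidirectional typing of canonical terms, with assignments ΓX, AX of contexts
    and types to logic variables. -/
inductive HasTy (ΓX : ℕ → Ctx) (AX : ℕ → Ty) : Ctx → Tm → Ty → Prop
  | var {Γ n f A} : VarTy Γ n f A → HasTy ΓX AX Γ (.var n f) A
  | lvar {Γ es sh X} : SubTy Γ es sh (ΓX X) → HasTy ΓX AX Γ (.lvar X es sh) (AX X)
  | pair {Γ M N A B} : HasTy ΓX AX Γ M A → HasTy ΓX AX Γ N B →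
      HasTy ΓX AX Γ (.pair M N) (.withT A B)
  | fst {Γ M A B} : HasTy ΓX AX Γ M (.withT A B) → HasTy ΓX AX Γ (.fst M) A
  | snd {Γ M A B} : HasTy ΓX AX Γ M (.withT A B) → HasTy ΓX AX Γ (.snd M) B
  | lamL {Γ M A B} : HasTy ΓX AX ((A,CFlag.l)::Γ) M B → HasTy ΓX AX Γ (.lamL M) (.lolli A B)
  | lamA {Γ M A B} : HasTy ΓX AX ((A,CFlag.a)::Γ) M B → HasTy ΓX AX Γ (.lamA M) (.affarr A B)
  | lamI {Γ M A B} : HasTy ΓX AX ((A,CFlag.i)::Γ) M B → HasTy ΓX AX Γ (.lamI M) (.arr A B)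
  | appL {Γ Γ₁ Γ₂ M N A B} : Split Γ Γ₁ Γ₂ → HasTy ΓX AX Γ₁ M (.lolli A B) →
      HasTy ΓX AX Γ₂ N A → HasTy ΓX AX Γ (.appL M N) B
  | appA {Γ Γ₁ Γ₂ M N A B} : Split Γ Γ₁ Γ₂ → NoLin Γ₂ → HasTy ΓX AX Γ₁ M (.affarr A B) →
      HasTy ΓX AX Γ₂ N A → HasTy ΓX AX Γ (.appA M N) B
  | appI {Γ M N A B} : HasTy ΓX AX Γ M (.arr A B) → HasTy ΓX AX (bar Γ) N A →
      HasTy ΓX AX Γ (.appI M N) B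

/-- All logic-variable substitutions occurring in a term are pattern substitutions. -/
def PatternTm : Tm → Prop
  | .var _ _ => True
  | .lvar _ es _ => PatternSub es
  | .pair M N => PatternTm M ∧ PatternTm N
  | .fst M => PatternTm M
  | .snd M => PatternTm M
  | .lamL M => PatternTm M
  | .lamA M => PatternTm M
  | .lamI M => PatternTm M
  | .appL M N => PatternTm M ∧ PatternTm N
  | .appA M N => PatternTm M ∧ PatternTm N
  | .appI M N => PatternTm M ∧ PatternTm N

/-- Occurrence n ∈ M of a variable in a term (flexible occurrences included). -/
inductive Occurs : ℕ → Tm → Prop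
  | var {n f} : Occurs n (.var n f)
  | lvar {n X es sh e} : e ∈ es → e.1 = n → Occurs n (.lvar X es sh)
  | pairl {n M N} : Occurs n M → Occurs n (.pair M N)
  | pairr {n M N} : Occurs n N → Occurs n (.pair M N)
  | fst {n M} : Occurs n M → Occurs n (.fst M)
  | snd {n M} : Occurs n M → Occurs n (.snd M)
  | lamL {n M} : Occurs (n+1) M → Occurs n (.lamL M)
  | lamA {n M} : Occurs (n+1) M → Occurs n (.lamA M)
  | lamI {n M} : Occurs (n+1) M → Occurs n (.lamI M)
  | appLl {n M N} : Occurs n M → Occurs n (.appL M N)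
  | appLr {n M N} : Occurs n N → Occurs n (.appL M N)
  | appAl {n M N} : Occurs n M → Occurs n (.appA M N)
  | appAr {n M N} : Occurs n N → Occurs n (.appA M N)
  | appIl {n M N} : Occurs n M → Occurs n (.appI M N)
  | appIr {n M N} : Occurs n N → Occurs n (.appI M N)

/-- Rigid occurrence n ∈_rig M: occurrence not inside a logic variable. -/
inductive RigidOccurs : ℕ → Tm → Prop
  | var {n f} : RigidOccurs n (.var n f)
  | pairl {n M N} : RigidOccurs n M → RigidOccurs n (.pair M N)
  | pairr {n M N} : RigidOccurs n N → RigidOccurs n (.pair M N)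
  | fst {n M} : RigidOccurs n M → RigidOccurs n (.fst M)
  | snd {n M} : RigidOccurs n M → RigidOccurs n (.snd M)
  | lamL {n M} : RigidOccurs (n+1) M → RigidOccurs n (.lamL M)
  | lamA {n M} : RigidOccurs (n+1) M → RigidOccurs n (.lamA M)
  | lamI {n M} : RigidOccurs (n+1) M → RigidOccurs n (.lamI M)
  | appLl {n M N} : RigidOccurs n M → RigidOccurs n (.appL M N)
  | appLr {n M N} : RigidOccurs n N → RigidOccurs n (.appL M N)
  | appAl {n M N} : RigidOccurs n M → RigidOccurs n (.appA M N)
  | appAr {n M N} : RigidOccurs n N → RigidOccurs n (.appA M N)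
  | appIl {n M N} : RigidOccurs n M → RigidOccurs n (.appI M N)
  | appIr {n M N} : RigidOccurs n N → RigidOccurs n (.appI M N)

/-- Occurrence of a logic variable X in a term. -/
inductive HasLvar : ℕ → Tm → Prop
  | lvar {X es sh} : HasLvar X (.lvar X es sh)
  | pairl {X M N} : HasLvar X M → HasLvar X (.pair M N)
  | pairr {X M N} : HasLvar X N → HasLvar X (.pair M N)
  | fst {X M} : HasLvar X M → HasLvar X (.fst M)
  | snd {X M} : HasLvar X M → HasLvar X (.snd M)
  | lamL {X M} : HasLvar X M → HasLvar X (.lamL M)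
  | lamA {X M} : HasLvar X M → HasLvar X (.lamA M)
  | lamI {X M} : HasLvar X M → HasLvar X (.lamI M)
  | appLl {X M N} : HasLvar X M → HasLvar X (.appL M N)
  | appLr {X M N} : HasLvar X N → HasLvar X (.appL M N)
  | appAl {X M N} : HasLvar X M → HasLvar X (.appA M N)
  | appAr {X M N} : HasLvar X N → HasLvar X (.appA M N)
  | appIl {X M N} : HasLvar X M → HasLvar X (.appI M N)
  | appIr {X M N} : HasLvar X N → HasLvar X (.appI M N)

/-- Look up a (1-based) variable index in a substitution es.↑^sh,
    returning the new index and variable flag. -/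
def lookupE (es : SubE) (sh : ℕ) (n : ℕ) (f : Flag) : ℕ × Flag :=
  match es[n-1]? with
  | some e => (e.1, e.2.1)
  | none => (n - es.length + sh, f)

/-- Extend a substitution under a binder: 1^{ff}.(s ∘ ↑). -/
def extSub (es : SubE) (f : Flag) : SubE := (1, f, f) :: shiftE es

/-- Apply a substitution (of the variable-entry form) to a term. -/
def applySub (es : SubE) (sh : ℕ) : Tm → Tm
  | .var n f => .var (lookupE es sh n f).1 (lookupE es sh n f).2
  | .lvar X ts _ =>
      .lvar X (ts.map fun e => ((lookupE es sh e.1 e.2.1).1, (lookupE es sh e.1 e.2.1).2, e.2.2)) sh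
  | .pair M N => .pair (applySub es sh M) (applySub es sh N)
  | .fst M => .fst (applySub es sh M)
  | .snd M => .snd (applySub es sh M)
  | .lamL M => .lamL (applySub (extSub es .L) (sh+1) M)
  | .lamA M => .lamA (applySub (extSub es .A) (sh+1) M)
  | .lamI M => .lamI (applySub (extSub es .I) (sh+1) M)
  | .appL M N => .appL (applySub es sh M) (applySub es sh N)
  | .appA M N => .appA (applySub es sh M) (applySub es sh N)
  | .appI M N => .appI (applySub es sh M) (applySub es sh N)

/-- Instantiation [X ← N]M of a logic variable. -/
def inst (X : ℕ) (N : Tm) : Tm → Tm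
  | .var n f => .var n f
  | .lvar Y es sh => if Y = X then applySub es sh N else .lvar Y es sh
  | .pair M M' => .pair (inst X N M) (inst X N M')
  | .fst M => .fst (inst X N M)
  | .snd M => .snd (inst X N M)
  | .lamL M => .lamL (inst X N M)
  | .lamA M => .lamA (inst X N M)
  | .lamI M => .lamI (inst X N M)
  | .appL M M' => .appL (inst X N M) (inst X N M')
  | .appA M M' => .appA (inst X N M) (inst X N M')
  | .appI M M' => .appI (inst X N M) (inst X N M')


/-- The identity substitution on a context (η-expanded). -/
def idSubC : Ctx → SubE
  | [] => []
  | e :: Γ => (1, cToF e.2, cToF e.2) :: shiftE (idSubC Γ)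

/-- weaken(Γ; i): the weakening substitution skipping the i-th assumption. -/
def weaken : Ctx → ℕ → SubE
  | [], _ => []
  | _ :: _, 0 => []
  | _ :: Γ, 1 => shiftE (idSubC Γ)
  | e :: Γ, i+2 => (1, cToF e.2, cToF e.2) :: shiftE (weaken Γ (i+1))

/-- Γ ÷ i: the context Γ with its i-th assumption removed. -/
def divCtx : Ctx → ℕ → Ctx
  | [], _ => []
  | Γ, 0 => Γ
  | _ :: Γ, 1 => Γ
  | e :: Γ, i+2 => e :: divCtx Γ (i+1)

/-- The indices of a substitution form a (strictly) increasing sequence. -/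
def Increasing (es : SubE) : Prop := es.Chain' (fun a b => a.1 < b.1)

/-! Both halves follow the recursion of `weaken`. Prefixing `1^{ff}` to a shifted substitution
keeps indices positive, distinct and increasing, and it is typed from `Γ, A^c` into `Γ', A^c` by
letting the new head consume `A^c` and passing its used version `A^{c.used}` on to the tail.
Typing is stable under one more shift `∘ ↑` past a non-linear assumption, and this is how the
skipped `i`-th assumption is discarded. -/

def CFlag.used : CFlag → CFlag
  | .l => .ul
  | .a => .ua
  | c => c

theorem CFlag.used_ne_l (c : CFlag) : c.used ≠ .l := by
  cases c <;> decide

theorem bar_cons (A : Ty) (c : CFlag) (Γ : Ctx) : bar ((A, c) :: Γ) = (A, c.used) :: bar Γ := by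
  cases c <;> rfl

theorem NoLin.cons {Γ : Ctx} (h : NoLin Γ) {A : Ty} {c : CFlag} (hc : c ≠ .l) :
    NoLin ((A, c) :: Γ) := by
  rintro e (_ | ⟨_, he⟩)
  exacts [hc, h e he]

theorem noLin_bar : ∀ Γ : Ctx, NoLin (bar Γ)
  | [] => by simp [NoLin, bar]
  | (A, c) :: Γ => bar_cons A c Γ ▸ (noLin_bar Γ).cons c.used_ne_l

theorem Split.cons_used_left {Γ Γ₁ Γ₂ : Ctx} (h : Split Γ Γ₁ Γ₂) (A : Ty) (c : CFlag) :
    Split ((A, c) :: Γ) ((A, c.used) :: Γ₁) ((A, c) :: Γ₂) := by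
  cases c
  exacts [h.int, h.affr, h.uaff, h.linr, h.ulin]

theorem split_bar : ∀ Γ : Ctx, Split Γ (bar Γ) Γ
  | [] => .nil
  | (A, c) :: Γ => bar_cons A c Γ ▸ (split_bar Γ).cons_used_left A c

theorem SubTy.shiftE {Γ Γ' : Ctx} {es : SubE} {n : ℕ} (h : SubTy Γ es n Γ') (B : Ty) {c : CFlag}
    (hc : c ≠ .l) : SubTy ((B, c) :: Γ) (LinUnif.shiftE es) (n + 1) Γ' := by
  induction h with
  | nil => exact .shift .nil hc
  | shift h hc' => exact .shift (.shift h hc') hc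
  | consI hv _ ih =>
    exact .consI (bar_cons B c _ ▸ hv.there c.used_ne_l) ih
  | consL hsp hv _ ih =>
    exact .consL (hsp.cons_used_left B c) (hv.there c.used_ne_l) ih
  | consA hsp hnl hv _ ih =>
    exact .consA (hsp.cons_used_left B c) (hnl.cons c.used_ne_l) (hv.there c.used_ne_l) ih
  | consUL hv _ ih => exact .consUL hv.there ih
  | consUA hv hf _ ih => exact .consUA hv.there hf ih

theorem SubTy.extend {Γ Γ' : Ctx} {es : SubE} {n : ℕ} (h : SubTy Γ es n Γ') (A : Ty) (c : CFlag) :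
    SubTy ((A, c) :: Γ) ((1, cToF c, cToF c) :: LinUnif.shiftE es) (n + 1) ((A, c) :: Γ') := by
  cases c with
  | i => exact .consI (bar_cons A .i Γ ▸ .here (f := .I) (noLin_bar Γ)) (h.shiftE A (by decide))
  | a =>
    exact .consA (.affl (split_bar Γ)) ((noLin_bar Γ).cons (by decide))
      (.here (f := .A) (noLin_bar Γ)) (h.shiftE A (by decide))
  | l => exact .consL (.linl (split_bar Γ)) (.here (f := .L) (noLin_bar Γ)) (h.shiftE A (by decide))
  | ua => exact .consUA (.here rfl) (by decide) (h.shiftE A (by decide))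
  | ul => exact .consUL (.here rfl) (h.shiftE A (by decide))

theorem subTy_idSubC : ∀ Γ : Ctx, SubTy Γ (idSubC Γ) Γ.length Γ
  | [] => .nil
  | (A, c) :: Γ => (subTy_idSubC Γ).extend A c

theorem subTy_weaken_succ : ∀ (Γ : Ctx) (i : ℕ) (hi : i < Γ.length), Γ[i].2 ≠ .l →
    SubTy Γ (weaken Γ (i + 1)) Γ.length (divCtx Γ (i + 1))
  | (A, _) :: Γ, 0, _, hc => (subTy_idSubC Γ).shiftE A hc
  | (A, c) :: Γ, i + 1, hi, hc => (subTy_weaken_succ Γ i (by simpa using hi) hc).extend A c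

def IsWeakeningSub (es : SubE) : Prop := PatternSub es ∧ Increasing es

theorem IsWeakeningSub.extend {es : SubE} (h : IsWeakeningSub es) (f : Flag) :
    IsWeakeningSub ((1, f, f) :: shiftE es) := by
  obtain ⟨⟨hne, hflag⟩, hinc⟩ := h
  have hpos : ∀ e ∈ es, 1 < e.1 + 1 := fun e he => Nat.lt_succ_of_le (hflag e he).2
  refine ⟨⟨?_, ?_⟩, ?_⟩
  · simp only [shiftE, List.pairwise_cons, List.pairwise_map, List.mem_map]
    refine ⟨?_, hne.imp fun hab => by simpa using hab⟩
    rintro _ ⟨e, he, rfl⟩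
    exact (hpos e he).ne
  · simp only [shiftE, List.mem_cons, List.mem_map]
    rintro _ (rfl | ⟨e, he, rfl⟩)
    exacts [⟨rfl, le_rfl⟩, ⟨(hflag e he).1, (hpos e he).le⟩]
  · refine List.isChain_cons.mpr ⟨?_, (List.isChain_map _).2 (hinc.imp fun _ _ => Nat.succ_lt_succ)⟩
    intro b hb
    obtain ⟨e, he, rfl⟩ := List.mem_map.mp (List.mem_of_mem_head? hb)
    exact hpos e he

theorem IsWeakeningSub.tail {es : SubE} (h : IsWeakeningSub es) : IsWeakeningSub es.tail :=
  ⟨⟨h.1.1.tail, fun e he => h.1.2 e (List.mem_of_mem_tail he)⟩, h.2.tail⟩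

theorem isWeakeningSub_idSubC : ∀ Γ : Ctx, IsWeakeningSub (idSubC Γ)
  | [] => ⟨⟨.nil, by simp [idSubC]⟩, .nil⟩
  | e :: Γ => (isWeakeningSub_idSubC Γ).extend (cToF e.2)

theorem isWeakeningSub_weaken : ∀ (Γ : Ctx) (i : ℕ), IsWeakeningSub (weaken Γ i)
  | [], _ => ⟨⟨.nil, by simp [weaken]⟩, .nil⟩
  | _ :: _, 0 => ⟨⟨.nil, by simp [weaken]⟩, .nil⟩
  | e :: Γ, 1 => (isWeakeningSub_idSubC (e :: Γ)).tail
  | e :: Γ, i + 2 => (isWeakeningSub_weaken Γ (i + 1)).extend (cToF e.2)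

/-- weakening substitutions are pattern substitutions with
    increasing indices, and weaken(Γ; i) is such a substitution, typed
    Γ ⊢ weaken(Γ; i) : Γ ÷ i, whenever the i-th assumption of Γ is not linear. -/
theorem weaken_is_weakening_sub (Γ : Ctx) (i : ℕ) (h1 : 1 ≤ i)
    (hi : i - 1 < Γ.length) (hnl : (Γ.get ⟨i - 1, hi⟩).2 ≠ CFlag.l) :
    PatternSub (weaken Γ i) ∧ Increasing (weaken Γ i) ∧
    SubTy Γ (weaken Γ i) Γ.length (divCtx Γ i) := by
  obtain ⟨j, rfl⟩ : ∃ j, i = j + 1 := ⟨i - 1, by omega⟩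
  exact ⟨(isWeakeningSub_weaken Γ (j + 1)).1, (isWeakeningSub_weaken Γ (j + 1)).2,
    subTy_weaken_succ Γ j hi hnl⟩

end LinUnif
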